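/- For the deposition Markov chain on a finite connected graph, the total height m_V(t) = max_{j∈V} h_j(t) started from h(0)=0 admits the path representation m_V(t) = t − ∑_{u=1}^{t−1} 1[#{j : x_j(u) ≠ x_j(u+1)} = 1], where x is the profile seen from the maximum (assuming |V| > 2, and counting from m_V(1)=1 after the first drop). -/
import Mathlib


-- Adding a particle at `i` with screening: the new particle lands at one plus the
-- maximal height in the closed neighborhood of `i`.
open Classical in
noncomputable def drop {V : Type*} [Fintype V] (G : SimpleGraph V) (i : V) (h : V → ℕ) :
    V → ℕ :=
  fun j => if j = i then (Finset.univ.filter fun k => k = i ∨ G.Adj i k).sup h + 1 else h j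

-- Maximal height of a profile.
def maxH {V : Type*} [Fintype V] (h : V → ℕ) : ℕ := Finset.univ.sup h

-- Height profile seen from the maximum.
def prof {V : Type*} [Fintype V] (h : V → ℕ) : V → ℤ := fun j => (h j : ℤ) - (maxH h : ℤ)

-- Height configuration after `t` particle drops at the sites `ω 0, ω 1, …`, starting
-- from the flat configuration `0`.
noncomputable def heights {V : Type*} [Fintype V] (G : SimpleGraph V) (ω : ℕ → V) :
    ℕ → V → ℕ
  | 0 => fun _ => 0
  | (t + 1) => drop G (ω t) (heights G ω t)

open Classical in
lemma drop_self {V : Type*} [Fintype V] (G : SimpleGraph V) (i : V) (h : V → ℕ) :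
    drop G i h i = (Finset.univ.filter fun k => k = i ∨ G.Adj i k).sup h + 1 := if_pos rfl

open Classical in
lemma drop_ne {V : Type*} [Fintype V] (G : SimpleGraph V) {i j : V} (h : V → ℕ)
    (hj : j ≠ i) : drop G i h j = h j := if_neg hj

open Classical in
lemma lt_drop_self {V : Type*} [Fintype V] (G : SimpleGraph V) (i : V) (h : V → ℕ) :
    h i < drop G i h i := by
  rw [drop_self]
  have : h i ≤ (Finset.univ.filter fun k => k = i ∨ G.Adj i k).sup h :=
    Finset.le_sup (by simp)
  omega

open Classical in
lemma maxH_drop {V : Type*} [Fintype V] (G : SimpleGraph V) (i : V) (h : V → ℕ) :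
    maxH h ≤ maxH (drop G i h) ∧ maxH (drop G i h) ≤ maxH h + 1 := by
  constructor
  · apply Finset.sup_mono_fun
    intro j _
    by_cases hj : j = i
    · subst hj; exact (lt_drop_self G j h).le
    · rw [drop_ne G h hj]
  · apply Finset.sup_le
    intro j _
    by_cases hj : j = i
    · subst hj
      rw [drop_self]
      have : (Finset.univ.filter fun k => k = j ∨ G.Adj j k).sup h ≤ maxH h :=
        Finset.sup_mono (Finset.filter_subset _ _)
      omega
    · rw [drop_ne G h hj]
      exact le_trans (Finset.le_sup (Finset.mem_univ j)) (Nat.le_succ _)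

open Classical in
/-- Key step lemma. -/
lemma step_lemma {V : Type*} [Fintype V] (G : SimpleGraph V) (hcard : 2 < Fintype.card V)
    (i : V) (h : V → ℕ) :
    (maxH (drop G i h) : ℤ) = (maxH h : ℤ) + 1 -
      (if (Finset.univ.filter fun j => prof h j ≠ prof (drop G i h) j).card = 1
        then (1 : ℤ) else 0) := by
  obtain ⟨h1, h2⟩ := maxH_drop G i h
  have hcase : maxH (drop G i h) = maxH h ∨ maxH (drop G i h) = maxH h + 1 := by omega
  rcases hcase with hc | hc
  · have hset : (Finset.univ.filter fun j => prof h j ≠ prof (drop G i h) j) = {i} := by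
      ext j
      simp only [Finset.mem_filter, Finset.mem_univ, true_and, Finset.mem_singleton]
      constructor
      · intro hne
        by_contra hj
        apply hne
        simp [prof, hc, drop_ne G h hj]
      · intro hj
        subst hj
        have := lt_drop_self G j h
        simp only [prof, hc, ne_eq]
        intro hcontra
        omega
    rw [hset]
    simp [hc]
  · have hsub : Finset.univ.erase i ⊆
        (Finset.univ.filter fun j => prof h j ≠ prof (drop G i h) j) := by
      intro j hj
      have hj' : j ≠ i := Finset.ne_of_mem_erase hj
      simp only [Finset.mem_filter, Finset.mem_univ, true_and]
      simp only [prof, hc, drop_ne G h hj', ne_eq]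
      intro hcontra
      push_cast at hcontra
      omega
    have hge : 2 ≤ (Finset.univ.filter fun j => prof h j ≠ prof (drop G i h) j).card := by
      have := Finset.card_le_card hsub
      rw [Finset.card_erase_of_mem (Finset.mem_univ i), Finset.card_univ] at this
      omega
    rw [if_neg (by omega)]
    rw [hc]
    push_cast
    ring

open Classical in
/-- Path representation of the total height: for `t ≥ 1`,
`m_V(t) = t − ∑_{u=1}^{t−1} 1[#{j : x_j(u) ≠ x_j(u+1)} = 1]`. -/
theorem stmt10 {V : Type*} [Fintype V] (G : SimpleGraph V)
    (hconn : G.Connected) (hcard : 2 < Fintype.card V)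
    (ω : ℕ → V) :
    ∀ t : ℕ, 1 ≤ t →
      (maxH (heights G ω t) : ℤ) =
        (t : ℤ) - ∑ u ∈ Finset.Ico 1 t,
          (if (Finset.univ.filter fun j =>
              prof (heights G ω u) j ≠ prof (heights G ω (u + 1)) j).card = 1
            then (1 : ℤ) else 0) := by
  intro t ht
  induction t with
  | zero => omega
  | succ n ih =>
    by_cases hn : 1 ≤ n
    · have hsum := Finset.sum_Ico_succ_top hn
        (fun u => (if (Finset.univ.filter fun j =>
            prof (heights G ω u) j ≠ prof (heights G ω (u + 1)) j).card = 1
          then (1 : ℤ) else 0))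
      rw [hsum]
      have hstep := step_lemma G hcard (ω n) (heights G ω n)
      have hh : heights G ω (n + 1) = drop G (ω n) (heights G ω n) := rfl
      rw [hh, hstep, ih hn]
      push_cast
      ring
    · have hn0 : n = 0 := by omega
      subst hn0
      simp only [Finset.Ico_self, Finset.sum_empty, sub_zero, Nat.cast_one]
      have : maxH (heights G ω 1) = 1 := by
        have hh : heights G ω 1 = drop G (ω 0) (fun _ => 0) := rfl
        rw [hh]
        apply le_antisymm
        · apply Finset.sup_le
          intro j _
          by_cases hj : j = ω 0
          · subst hj
            rw [drop_self]
            have : (Finset.univ.filter fun k => k = ω 0 ∨ G.Adj (ω 0) k).sup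
                (fun _ => (0:ℕ)) ≤ 0 := Finset.sup_le fun _ _ => le_refl 0
            omega
          · rw [drop_ne G _ hj]
            exact Nat.zero_le 1
        · calc (1:ℕ) = drop G (ω 0) (fun _ => 0) (ω 0) := by
                rw [drop_self]
                have : (Finset.univ.filter fun k => k = ω 0 ∨ G.Adj (ω 0) k).sup
                    (fun _ => (0:ℕ)) ≤ 0 := Finset.sup_le fun _ _ => le_refl 0
                omega
            _ ≤ _ := Finset.le_sup (Finset.mem_univ _)
      rw [this]
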